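/- Let F, G : C → D be multifunctors between closed multicategories with unit objects inducing the same closed functor Φ = (φ, φ̂, φ⁰) between the underlying closed categories. Then F = G as multifunctors. -/

import Mathlib

universe u v

/-- A family of multimorphisms `f_i : Xss_i → Ys_i` (with matching lengths),
used to express simultaneous composition in a multicategory. -/
inductive HomFam (Obj : Type u) (Hom : List Obj → Obj → Type v) :
    List (List Obj) → List Obj → Type (max u v)
  | nil : HomFam Obj Hom [] []
  | cons {Xs Y Xss Ys} : Hom Xs Y → HomFam Obj Hom Xss Ys →
      HomFam Obj Hom (Xs :: Xss) (Y :: Ys)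

/-- A family of families of multimorphisms. -/
inductive FamFam (Obj : Type u) (Hom : List Obj → Obj → Type v) :
    List (List (List Obj)) → List (List Obj) → Type (max u v)
  | nil : FamFam Obj Hom [] []
  | cons {Xss Ys Xsss Yss} : HomFam Obj Hom Xss Ys → FamFam Obj Hom Xsss Yss →
      FamFam Obj Hom (Xss :: Xsss) (Ys :: Yss)

variable {Obj : Type u} {Hom : List Obj → Obj → Type v}

/-- The family of identities on a list of objects. -/
def idFam (ident : ∀ X, Hom [X] X) : ∀ Ys : List Obj,
    HomFam Obj Hom (Ys.map fun y => [y]) Ys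
  | [] => .nil
  | y :: ys => .cons (ident y) (idFam ident ys)

/-- Concatenation of families. -/
def appendFam : ∀ {A B C D}, HomFam Obj Hom A B → HomFam Obj Hom C D →
    HomFam Obj Hom (A ++ C) (B ++ D)
  | _, _, _, _, .nil, t => t
  | _, _, _, _, .cons f fs, t => .cons f (appendFam fs t)

/-- Flattening a family of families. -/
def flattenFam : ∀ {Xsss Yss}, FamFam Obj Hom Xsss Yss →
    HomFam Obj Hom Xsss.flatten Yss.flatten
  | _, _, .nil => .nil
  | _, _, .cons fs fss => appendFam fs (flattenFam fss)

/-- Componentwise composition of a family of families with a family. -/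
def zipComp
    (comp : ∀ {Xss Ys Z}, HomFam Obj Hom Xss Ys → Hom Ys Z → Hom Xss.flatten Z) :
    ∀ {Xsss Yss Zs}, FamFam Obj Hom Xsss Yss → HomFam Obj Hom Yss Zs →
      HomFam Obj Hom (Xsss.map List.flatten) Zs
  | _, _, _, .nil, .nil => .nil
  | _, _, _, .cons fs fss, .cons g gs => .cons (comp fs g) (zipComp comp fss gs)

/-- A multicategory: objects, multimorphisms `X₁,…,Xₙ → Y`, identities and an
associative and unital simultaneous composition `(f₁,…,fₙ) · g`. -/
structure Multicategory : Type (max (u + 1) (v + 1)) where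
  Obj : Type u
  Hom : List Obj → Obj → Type v
  ident : ∀ X : Obj, Hom [X] X
  comp : ∀ {Xss : List (List Obj)} {Ys : List Obj} {Z : Obj},
    HomFam Obj Hom Xss Ys → Hom Ys Z → Hom Xss.flatten Z
  id_comp : ∀ {Ys Z} (g : Hom Ys Z), HEq (comp (idFam ident Ys) g) g
  comp_id : ∀ {Xs Y} (f : Hom Xs Y), HEq (comp (.cons f .nil) (ident Y)) f
  assoc : ∀ {Xsss Yss Zs Z} (fss : FamFam Obj Hom Xsss Yss)
    (gs : HomFam Obj Hom Yss Zs) (h : Hom Zs Z),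
    HEq (comp (zipComp (fun fs g => comp fs g) fss gs) h)
        (comp (flattenFam fss) (comp gs h))

namespace Multicategory

variable (M : Multicategory.{u, v})

theorem map_singleton_flatten (l : List M.Obj) :
    (l.map fun x => [x]).flatten = l := by
  induction l <;> simp_all

theorem sflat (Xs Ys : List M.Obj) :
    ((Xs.map fun x => [x]) ++ [Ys]).flatten = Xs ++ Ys := by
  induction Xs <;> simp_all

theorem sflat2 (Xs Γ : List M.Obj) :
    (Xs :: (Γ.map fun x => [x])).flatten = Xs ++ Γ := by
  simp [List.flatten_cons, map_singleton_flatten]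

/-- `(1,…,1,f) · g` : plugging `f` into the last argument of `g`. -/
def plug {Xs Ys : List M.Obj} {H Z : M.Obj} (f : M.Hom Ys H)
    (g : M.Hom (Xs ++ [H]) Z) : M.Hom (Xs ++ Ys) Z :=
  cast (congrArg (M.Hom · Z) (M.sflat Xs Ys))
    (M.comp (appendFam (idFam M.ident Xs) (.cons f .nil)) g)

/-- `(f,1,…,1) · g` : plugging `f` into the first argument of `g`. -/
def plugFirst {Xs Γ : List M.Obj} {Y Z : M.Obj} (f : M.Hom Xs Y)
    (g : M.Hom (Y :: Γ) Z) : M.Hom (Xs ++ Γ) Z :=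
  cast (congrArg (M.Hom · Z) (M.sflat2 Xs Γ))
    (M.comp (.cons f (idFam M.ident Γ)) g)

/-- `(f) · h` : composing a multimorphism with a unary morphism. -/
def postcomp {Γ : List M.Obj} {Y Z : M.Obj} (f : M.Hom Γ Y) (h : M.Hom [Y] Z) :
    M.Hom Γ Z :=
  cast (congrArg (M.Hom · Z) (by simp : ([Γ].flatten : List M.Obj) = Γ))
    (M.comp (.cons f .nil) h)

/-- Composition in the underlying category. -/
def comp1 {X Y Z : M.Obj} (f : M.Hom [X] Y) (g : M.Hom [Y] Z) : M.Hom [X] Z :=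
  M.postcomp f g

/-- `(a, b) · g` : binary simultaneous composition. -/
def pair {As Bs : List M.Obj} {A' B' Cc : M.Obj} (a : M.Hom As A') (b : M.Hom Bs B')
    (g : M.Hom [A', B'] Cc) : M.Hom (As ++ Bs) Cc :=
  cast (congrArg (M.Hom · Cc) (by simp : ([As, Bs].flatten : List M.Obj) = As ++ Bs))
    (M.comp (.cons a (.cons b .nil)) g)

/-- `(f₁,…,fₘ,1) · g` for a family of unary morphisms `fᵢ`. -/
def sideComp {As Bs : List M.Obj} (fs : HomFam M.Obj M.Hom (As.map fun a => [a]) Bs)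
    {H Z : M.Obj} (g : M.Hom (Bs ++ [H]) Z) : M.Hom (As ++ [H]) Z :=
  cast (congrArg (M.Hom · Z) (M.sflat As [H]))
    (M.comp (appendFam fs (.cons (M.ident H) .nil)) g)

end Multicategory

/-- The image of a family of multimorphisms under a multifunctor. -/
def mapFam {M N : Multicategory.{u, v}} (obj : M.Obj → N.Obj)
    (map : ∀ {Xs Y}, M.Hom Xs Y → N.Hom (Xs.map obj) (obj Y)) :
    ∀ {Xss Ys}, HomFam M.Obj M.Hom Xss Ys →
      HomFam N.Obj N.Hom (Xss.map (List.map obj)) (Ys.map obj)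
  | _, _, .nil => .nil
  | _, _, .cons f fs => .cons (map f) (mapFam obj @map fs)

/-- A multifunctor between multicategories. -/
structure Multifunctor (M N : Multicategory.{u, v}) : Type (max u v) where
  obj : M.Obj → N.Obj
  map : ∀ {Xs Y}, M.Hom Xs Y → N.Hom (Xs.map obj) (obj Y)
  map_ident : ∀ X, map (M.ident X) = N.ident (obj X)
  map_comp : ∀ {Xss Ys Z} (fs : HomFam M.Obj M.Hom Xss Ys) (g : M.Hom Ys Z),
    HEq (map (M.comp fs g)) (N.comp (mapFam obj @map fs) (map g))

/-- A closed multicategory : a multicategory together with internal hom objects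
and evaluation morphisms such that `φ : f ↦ (1,…,1,f)·ev` is a bijection. -/
structure ClosedMulticategory extends Multicategory.{u, v} where
  ihom : List Obj → Obj → Obj
  ev : ∀ (Xs : List Obj) (Z : Obj), Hom (Xs ++ [ihom Xs Z]) Z
  closed : ∀ (Xs Ys : List Obj) (Z : Obj),
    Function.Bijective
      (fun f : Hom Ys (ihom Xs Z) => toMulticategory.plug f (ev Xs Z))

namespace ClosedMulticategory

variable (C : ClosedMulticategory.{u, v})

/-- The inverse of the bijection `φ` : currying. -/
noncomputable def curry {Xs Ys : List C.Obj} {Z : C.Obj}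
    (f : C.Hom (Xs ++ Ys) Z) : C.Hom Ys (C.ihom Xs Z) :=
  (Equiv.ofBijective _ (C.closed Xs Ys Z)).symm f

/-- The covariant action `C̲(W₁,…,Wₘ; h)` of a unary morphism `h` on internal
homs, defined by `(1,…,1,C̲(Ws;h)) · ev_{Ws;B} = ev_{Ws;A} · h`. -/
noncomputable def homCovM (Ws : List C.Obj) {A B : C.Obj} (h : C.Hom [A] B) :
    C.Hom [C.ihom Ws A] (C.ihom Ws B) :=
  C.curry (Xs := Ws) (C.toMulticategory.postcomp (C.ev Ws A) h)

/-- The contravariant action `C̲(h; Z)` of a unary morphism `h : A → B` on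
internal homs, defined by `(1,C̲(h;Z)) · ev_{A;Z} = (h,1) · ev_{B;Z}`. -/
noncomputable def homContra {A B : C.Obj} (h : C.Hom [A] B) (Z : C.Obj) :
    C.Hom [C.ihom [B] Z] (C.ihom [A] Z) :=
  C.curry (Xs := [A]) (C.toMulticategory.plugFirst h (C.ev [B] Z))

/-- The contravariant action `C̲(f₁,…,fₘ; Z)` of a family of unary morphisms on
internal homs. -/
noncomputable def homContraM {As Bs : List C.Obj}
    (fs : HomFam C.Obj C.Hom (As.map fun a => [a]) Bs) (Z : C.Obj) :
    C.Hom [C.ihom Bs Z] (C.ihom As Z) :=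
  C.curry (Xs := As) (C.toMulticategory.sideComp fs (C.ev Bs Z))

/-- Composition `μ` of the `C`-category `C̲`, determined by
`(1_X, μ)·ev_{X;Z} = (ev_{X;Y},1)·ev_{Y;Z}`. -/
noncomputable def mu (X Y Z : C.Obj) :
    C.Hom [C.ihom [X] Y, C.ihom [Y] Z] (C.ihom [X] Z) :=
  C.curry (Xs := [X])
    (C.toMulticategory.plugFirst (Xs := [X, C.ihom [X] Y]) (Γ := [C.ihom [Y] Z])
      (C.ev [X] Y) (C.ev [Y] Z))

/-- The identity `⟨1_X⟩ : () → C̲(X;X)` of the `C`-category `C̲`. -/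
noncomputable def oneHom (X : C.Obj) : C.Hom [] (C.ihom [X] X) :=
  C.curry (Xs := [X]) (Ys := []) (C.ident X)

/-- The morphism `L^X_{YZ} : C̲(Y;Z) → C̲(C̲(X;Y);C̲(X;Z))`, uniquely determined
by `(1, L^X_{YZ}) · ev = μ`. -/
noncomputable def Lhat (X Y Z : C.Obj) :
    C.Hom [C.ihom [Y] Z] (C.ihom [C.ihom [X] Y] (C.ihom [X] Z)) :=
  C.curry (Xs := [C.ihom [X] Y]) (C.mu X Y Z)

/-- The action `C̲(u;1) : C̲(1;X) → C̲(;X) = X` of a nullary morphism `u`. -/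
def uAct {one : C.Obj} (u : C.Hom [] one) (X : C.Obj) :
    C.Hom [C.ihom [one] X] X :=
  C.toMulticategory.plugFirst u (C.ev [one] X)

/-- `(one, u)` is a unit object of the closed multicategory `C` if all the
morphisms `C̲(u;1) : C̲(1;X) → X` are invertible. -/
def IsUnitObj (one : C.Obj) (u : C.Hom [] one) : Prop :=
  ∀ X : C.Obj, ∃ inv : C.Hom [X] (C.ihom [one] X),
    C.toMulticategory.comp1 (C.uAct u X) inv = C.ident (C.ihom [one] X) ∧
    C.toMulticategory.comp1 inv (C.uAct u X) = C.ident X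

end ClosedMulticategory

/-- The closing transformation `F̲_{Xs;Z} : F C̲(Xs;Z) → D̲(F Xs; FZ)` of a
multifunctor between closed multicategories, i.e. the unique morphism with
`(1,…,1,F̲) · ev^D = F(ev^C)`. -/
noncomputable def closingTrans {C D : ClosedMulticategory.{u, v}}
    (F : Multifunctor C.toMulticategory D.toMulticategory)
    (Xs : List C.Obj) (Z : C.Obj) :
    D.Hom [F.obj (C.ihom Xs Z)] (D.ihom (Xs.map F.obj) (F.obj Z)) :=
  D.curry (Xs := Xs.map F.obj)
    (cast (congrArg (D.Hom · (F.obj Z)) (List.map_append : List.map F.obj (Xs ++ [C.ihom Xs Z]) = Xs.map F.obj ++ [C.ihom Xs Z].map F.obj))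
      (F.map (C.ev Xs Z)))

/-! Every `f : X, Γ → Y` equals `(1_X, curry f) · ev_{X;Y}`, so by induction on the arity a
multifunctor is determined by its values on unary morphisms, on the evaluations `ev_{X;Y}` and
on nullary morphisms. The closing transformation `F̲_{X;Y}` is the curried form of
`F(ev_{X;Y})`, so it determines it. A nullary `f : () → Y` factors as `u · g` with `g` unary:
if `s` is the inverse of `C̲(u;1)`, then `g = (1, f · s) · ev` works, because
`u · ((1, k) · ev) = (u, k) · ev = k · ((u, 1) · ev) = k · C̲(u;1)` for nullary `k`. -/

namespace HomFam

variable {Obj : Type u} {Hom : List Obj → Obj → Type v}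

def Forall (P : ∀ Xs Y, Hom Xs Y → Prop) :
    ∀ {Xss Ys}, HomFam Obj Hom Xss Ys → Prop
  | _, _, .nil => True
  | _, _, .cons f fs => P _ _ f ∧ fs.Forall P

end HomFam

namespace Multicategory

variable (M : Multicategory.{u, v})

theorem comp_singleton_comp_singleton {Xs : List M.Obj} {A B Z : M.Obj}
    (f : M.Hom Xs A) (s : M.Hom [A] B) (t : M.Hom [B] Z) :
    M.comp (.cons (M.comp (.cons f .nil) s) .nil) t ≍
      M.comp (.cons f .nil) (M.comp (.cons s .nil) t) :=
  M.assoc (.cons (.cons f .nil) .nil) (.cons s .nil) t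

theorem comp_pair_nullary_eq_comp_fst {A B Y : M.Obj} (a : M.Hom [] A) (b : M.Hom [] B)
    (e : M.Hom [A, B] Y) :
    M.comp (.cons a (.cons b .nil)) e =
      M.comp (.cons a .nil) (M.comp (.cons (M.ident A) (.cons b .nil)) e) := by
  have h := eq_of_heq (M.assoc (.cons (.cons a .nil) (.cons .nil .nil))
    (.cons (M.ident A) (.cons b .nil)) e)
  simp only [zipComp, flattenFam, appendFam] at h
  have hb : M.comp .nil b = b := eq_of_heq (M.id_comp b)
  rwa [eq_of_heq (M.comp_id a), hb] at h

theorem comp_pair_nullary_eq_comp_snd {A B Y : M.Obj} (a : M.Hom [] A) (b : M.Hom [] B)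
    (e : M.Hom [A, B] Y) :
    M.comp (.cons a (.cons b .nil)) e =
      M.comp (.cons b .nil) (M.comp (.cons a (.cons (M.ident B) .nil)) e) := by
  have h := eq_of_heq (M.assoc (.cons .nil (.cons (.cons b .nil) .nil))
    (.cons a (.cons (M.ident B) .nil)) e)
  simp only [zipComp, flattenFam, appendFam] at h
  have ha : M.comp .nil a = a := eq_of_heq (M.id_comp a)
  rwa [ha, eq_of_heq (M.comp_id b)] at h

theorem exists_comp_nullary_eq {one H Y : M.Obj} (u : M.Hom [] one) (e : M.Hom [one, H] Y)
    (s : M.Hom [Y] H) (hs : M.comp1 s (M.plugFirst u e) = M.ident Y) (f : M.Hom [] Y) :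
    ∃ g : M.Hom [one] Y, M.comp (.cons u .nil) g = f := by
  have hs' : M.comp (.cons s .nil) (M.comp (.cons u (.cons (M.ident H) .nil)) e) =
      M.ident Y := hs
  refine ⟨M.comp (.cons (M.ident one) (.cons (M.comp (.cons f .nil) s) .nil)) e, ?_⟩
  calc M.comp (.cons u .nil)
        (M.comp (.cons (M.ident one) (.cons (M.comp (.cons f .nil) s) .nil)) e)
      = M.comp (.cons (M.comp (.cons f .nil) s) .nil)
          (M.comp (.cons u (.cons (M.ident H) .nil)) e) := by
        rw [← comp_pair_nullary_eq_comp_fst, comp_pair_nullary_eq_comp_snd]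
    _ = M.comp (.cons f .nil) (M.ident Y) := by
        rw [← hs']; exact eq_of_heq (M.comp_singleton_comp_singleton f s _)
    _ = f := eq_of_heq (M.comp_id f)

end Multicategory

namespace ClosedMulticategory

variable (C : ClosedMulticategory.{u, v})

theorem curry_injective {Xs Ys : List C.Obj} {Z : C.Obj} :
    Function.Injective (C.curry (Xs := Xs) (Ys := Ys) (Z := Z)) :=
  (Equiv.ofBijective _ (C.closed Xs Ys Z)).symm.injective

theorem comp_ident_curry_ev {X : C.Obj} {Γ : List C.Obj} {Y : C.Obj} (f : C.Hom (X :: Γ) Y) :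
    C.comp (.cons (C.ident X) (.cons (C.curry (Xs := [X]) f) .nil)) (C.ev [X] Y) ≍ f := by
  have h := (Equiv.ofBijective _ (C.closed [X] Γ Y)).apply_symm_apply f
  exact (cast_heq _ _).symm.trans (heq_of_eq h)

end ClosedMulticategory

namespace Multifunctor

variable {M N : Multicategory.{u, v}}

theorem ext_of_heq {F G : Multifunctor M N} (hobj : F.obj = G.obj)
    (hmap : ∀ Xs Y (f : M.Hom Xs Y), F.map f ≍ G.map f) : F = G := by
  obtain ⟨Fo, Fm, _, _⟩ := F
  obtain ⟨Go, Gm, _, _⟩ := G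
  subst hobj
  obtain rfl : @Fm = @Gm := by
    funext Xs Y f
    exact eq_of_heq (hmap Xs Y f)
  rfl

theorem map_congr_heq (F : Multifunctor M N) {Xs Xs' : List M.Obj} {Y : M.Obj}
    (h : Xs = Xs') {f : M.Hom Xs Y} {f' : M.Hom Xs' Y} (hf : f ≍ f') :
    F.map f ≍ F.map f' := by
  subst h; rw [eq_of_heq hf]

theorem map_comp_heq_of_forall {F G : Multifunctor M N} (hobj : F.obj = G.obj)
    {Xss : List (List M.Obj)} {Ys : List M.Obj} {Z : M.Obj} {fs : HomFam M.Obj M.Hom Xss Ys}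
    {g : M.Hom Ys Z} (hfs : fs.Forall fun _ _ f => F.map f ≍ G.map f)
    (hg : F.map g ≍ G.map g) :
    F.map (M.comp fs g) ≍ G.map (M.comp fs g) := by
  obtain ⟨Fo, Fm, _, Fmc⟩ := F
  obtain ⟨Go, Gm, _, Gmc⟩ := G
  dsimp only at hobj hfs hg ⊢
  subst hobj
  have hmapFam : mapFam Fo @Fm fs = mapFam Fo @Gm fs := by
    clear hg g
    induction fs with
    | nil => rfl
    | cons f fs ih => simp only [mapFam, eq_of_heq hfs.1, ih hfs.2]
  refine (Fmc fs g).trans ?_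
  rw [hmapFam, eq_of_heq hg]
  exact (Gmc fs g).symm

end Multifunctor

theorem map_ev_heq_of_closingTrans_heq {C D : ClosedMulticategory.{u, v}}
    {F G : Multifunctor C.toMulticategory D.toMulticategory} (hobj : F.obj = G.obj)
    {Xs : List C.Obj} {Z : C.Obj} (h : closingTrans F Xs Z ≍ closingTrans G Xs Z) :
    F.map (C.ev Xs Z) ≍ G.map (C.ev Xs Z) := by
  obtain ⟨Fo, Fm, _, _⟩ := F
  obtain ⟨Go, Gm, _, _⟩ := G
  subst hobj
  have h' := D.curry_injective (eq_of_heq h)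
  exact (cast_heq _ _).symm.trans ((heq_of_eq h').trans (cast_heq _ _))

section Agreement

variable {C : ClosedMulticategory.{u, v}} {N : Multicategory.{u, v}}
  {F G : Multifunctor C.toMulticategory N}

theorem map_nullary_heq_of_isUnitObj (hobj : F.obj = G.obj)
    (hunary : ∀ {X Y : C.Obj} (f : C.Hom [X] Y), F.map f ≍ G.map f)
    {one : C.Obj} {u : C.Hom [] one} (hC : C.IsUnitObj one u) (hu : F.map u ≍ G.map u)
    {Y : C.Obj} (f : C.Hom [] Y) : F.map f ≍ G.map f := by
  obtain ⟨s, -, hs⟩ := hC Y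
  obtain ⟨g, rfl⟩ := C.exists_comp_nullary_eq u (C.ev [one] Y) s hs f
  exact Multifunctor.map_comp_heq_of_forall hobj ⟨hu, trivial⟩ (hunary g)

theorem map_heq_of_map_nullary_heq (hobj : F.obj = G.obj)
    (hunary : ∀ {X Y : C.Obj} (f : C.Hom [X] Y), F.map f ≍ G.map f)
    (hev : ∀ X Y, F.map (C.ev [X] Y) ≍ G.map (C.ev [X] Y))
    (hnullary : ∀ {Y : C.Obj} (f : C.Hom [] Y), F.map f ≍ G.map f) :
    ∀ Xs Y (f : C.Hom Xs Y), F.map f ≍ G.map f := by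
  intro Xs
  induction Xs with
  | nil => exact fun _ f => hnullary f
  | cons X Γ ih =>
    intro Y f
    have hf := C.comp_ident_curry_ev f
    have hlist : [[X], Γ].flatten = X :: Γ := by simp
    refine (F.map_congr_heq hlist hf).symm.trans
      ((Multifunctor.map_comp_heq_of_forall hobj ?_ (hev X Y)).trans
        (G.map_congr_heq hlist hf))
    exact ⟨hunary _, ih _ _, trivial⟩

end Agreement

open ClosedMulticategory in
theorem multifunctor_ext_general (C D : ClosedMulticategory.{u, v})
    (oneC : C.Obj) (uC : C.Hom [] oneC) (hC : C.IsUnitObj oneC uC)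
    (F G : Multifunctor C.toMulticategory D.toMulticategory)
    (hobj : F.obj = G.obj)
    (hmap : ∀ {X Y : C.Obj} (f : C.Hom [X] Y), HEq (F.map f) (G.map f))
    (hu : HEq (F.map uC) (G.map uC))
    (hhat : ∀ X Y : C.Obj, HEq (closingTrans F [X] Y) (closingTrans G [X] Y)) :
    F = G := by
  have hev X Y := map_ev_heq_of_closingTrans_heq hobj (hhat X Y)
  exact Multifunctor.ext_of_heq hobj <| map_heq_of_map_nullary_heq hobj hmap hev
    (map_nullary_heq_of_isUnitObj hobj hmap hC hu)

open ClosedMulticategory in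
/-- Let `F, G : C → D` be multifunctors between closed
multicategories with unit objects inducing the same closed functor between the
underlying closed categories (same object map, same action on unary morphisms,
same closing transformations `φ̂`, and same `φ⁰`, the latter being equivalent to
`F(u) = G(u)`).  Then `F = G` as multifunctors. -/
theorem multifunctor_ext (C D : ClosedMulticategory.{u, v})
    (oneC : C.Obj) (uC : C.Hom [] oneC) (hC : C.IsUnitObj oneC uC)
    (oneD : D.Obj) (uD : D.Hom [] oneD) (hD : D.IsUnitObj oneD uD)
    (F G : Multifunctor C.toMulticategory D.toMulticategory)
    (hobj : F.obj = G.obj)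
    (hmap : ∀ {X Y : C.Obj} (f : C.Hom [X] Y), HEq (F.map f) (G.map f))
    (hu : HEq (F.map uC) (G.map uC))
    (hhat : ∀ X Y : C.Obj, HEq (closingTrans F [X] Y) (closingTrans G [X] Y)) :
    F = G :=
  multifunctor_ext_general C D oneC uC hC F G hobj hmap hu hhat
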